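/- arXiv:2108.05629 — 4 statements merged into one kernel-verified Lean document; each statement's English description precedes it below -/
import Mathlib

section
/- Let A be an n×n real matrix (n ≥ 2) and b ∈ ℝⁿ such that the Kalman rank condition holds: span{b, Ab, ..., A^{n-1}b} = ℝⁿ. Define f_n = b and, for 1 ≤ k ≤ n-1, f_k = (A^{n-k} + Σ_{j=1}^{n-k} a_j A^{n-k-j}) b, where a_1, ..., a_n are the coefficients of the characteristic polynomial of A (det(xI - A) = x^n + a_1 x^{n-1} + ... + a_n). Then the matrix P with columns f_1, ..., f_n is invertible. -/
/-!
With `a₀ = 1`, the `k`-th column of `P` is `∑_{j ≤ n-k} a_j A^{n-k-j} b`, so `P = K H` where `K` is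
the Kalman matrix with columns `b, Ab, …, A^{n-1} b` and `H` is the Hankel matrix with entries
`a_{n-1-i-j}` on and above the antidiagonal and `0` below it. The Kalman condition makes `K` invertible,
and reversing the columns of `H` gives an upper triangular matrix with `a₀ = 1` on the diagonal.
-/

open Matrix Finset

/-- The Kalman rank condition: span{b, Ab, ..., A^(n-1) b} = ℝⁿ. -/
def Kalman (n : ℕ) (A : Matrix (Fin n) (Fin n) ℝ) (b : Fin n → ℝ) : Prop :=
  Submodule.span ℝ (Set.range fun k : Fin n => (A ^ (k : ℕ)).mulVec b) = ⊤

/-- The coefficients a_j of the characteristic polynomial of A: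
det(xI - A) = x^n + a_1 x^(n-1) + ... + a_n, i.e. a_j = coeff (n - j). -/
noncomputable def coeffa (n : ℕ) (A : Matrix (Fin n) (Fin n) ℝ) (j : ℕ) : ℝ :=
  A.charpoly.coeff (n - j)

/-- p_k(A) = A^(n-k) + Σ_{j=1}^{n-k} a_j A^(n-k-j)  (so p_n(A) = I). -/
noncomputable def pk (n : ℕ) (A : Matrix (Fin n) (Fin n) ℝ) (k : ℕ) :
    Matrix (Fin n) (Fin n) ℝ :=
  A ^ (n - k) + ∑ j ∈ Finset.Icc 1 (n - k), coeffa n A j • A ^ (n - k - j)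

/-- The Brunovsky change-of-basis matrix P(b), whose k-th column is f_k = p_k(A) b. -/
noncomputable def PB (n : ℕ) (A : Matrix (Fin n) (Fin n) ℝ) (b : Fin n → ℝ) :
    Matrix (Fin n) (Fin n) ℝ :=
  Matrix.of fun r c => ((pk n A ((c : ℕ) + 1)).mulVec b) r

/-- The companion matrix of the characteristic polynomial of A: ones on the
superdiagonal, last row (-a_n, ..., -a_1). -/
noncomputable def companion (n : ℕ) (A : Matrix (Fin n) (Fin n) ℝ) :
    Matrix (Fin n) (Fin n) ℝ :=
  Matrix.of fun i j =>
    if (i : ℕ) = n - 1 then -(coeffa n A (n - (j : ℕ)))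
    else if (j : ℕ) = (i : ℕ) + 1 then 1 else 0

/-- The last vector of the canonical basis of ℝⁿ. -/
def elast (n : ℕ) : Fin n → ℝ := fun i => if (i : ℕ) = n - 1 then 1 else 0


section

variable {R : Type*} [CommRing R] {n : ℕ}

def krylovMatrix (A : Matrix (Fin n) (Fin n) R) (b : Fin n → R) : Matrix (Fin n) (Fin n) R :=
  Matrix.of fun r c => (A ^ (c : ℕ) *ᵥ b) r

theorem krylovMatrix_mulVec (A : Matrix (Fin n) (Fin n) R) (b v : Fin n → R) :
    krylovMatrix A b *ᵥ v = ∑ m : Fin n, v m • (A ^ (m : ℕ) *ᵥ b) := by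
  ext r
  simp [krylovMatrix, mulVec, dotProduct, mul_comm]

theorem isUnit_krylovMatrix_iff (A : Matrix (Fin n) (Fin n) R) (b : Fin n → R) :
    IsUnit (krylovMatrix A b) ↔
      Submodule.span R (Set.range fun k : Fin n => A ^ (k : ℕ) *ᵥ b) = ⊤ := by
  rw [← mulVec_surjective_iff_isUnit, ← coe_mulVecLin, ← LinearMap.range_eq_top,
    range_mulVecLin]
  rfl

def triangularHankel (n : ℕ) (a : ℕ → R) : Matrix (Fin n) (Fin n) R :=
  Matrix.of fun i j => if (i : ℕ) + j < n then a (n - 1 - (i + j)) else 0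

theorem isUpperTriangular_triangularHankel_submatrix_rev (a : ℕ → R) :
    ((triangularHankel n a).submatrix id Fin.revPerm).IsUpperTriangular := by
  intro i j hij
  have : (j : ℕ) < i := hij
  simp only [triangularHankel, submatrix_apply, id_eq, Fin.revPerm_apply, Fin.val_rev, of_apply]
  rw [if_neg (by omega)]

theorem det_triangularHankel_submatrix_rev (a : ℕ → R) :
    ((triangularHankel n a).submatrix id Fin.revPerm).det = a 0 ^ n := by
  have hdiag (i : Fin n) : triangularHankel n a i i.rev = a 0 := by
    simp only [triangularHankel, of_apply, Fin.val_rev]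
    rw [if_pos (by omega)]
    congr 1
    omega
  simp [det_of_isUpperTriangular (isUpperTriangular_triangularHankel_submatrix_rev a), hdiag]

theorem isUnit_triangularHankel {a : ℕ → R} (ha : IsUnit (a 0)) :
    IsUnit (triangularHankel n a) := by
  rw [isUnit_iff_isUnit_det]
  have h := det_permute' Fin.revPerm (triangularHankel n a)
  rw [det_triangularHankel_submatrix_rev] at h
  exact isUnit_of_mul_isUnit_right (h ▸ ha.pow n)

end

theorem coeffa_zero (n : ℕ) (A : Matrix (Fin n) (Fin n) ℝ) : coeffa n A 0 = 1 := by
  simpa [coeffa] using (charpoly_monic A).coeff_natDegree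

theorem pk_eq_sum_range (n : ℕ) (A : Matrix (Fin n) (Fin n) ℝ) (k : ℕ) :
    pk n A k = ∑ j ∈ range (n - k + 1), coeffa n A j • A ^ (n - k - j) := by
  rw [range_eq_Ico, sum_eq_sum_Ico_succ_bot (Nat.succ_pos _), coeffa_zero, one_smul, tsub_zero]
  rfl

theorem PB_eq_krylovMatrix_mul_triangularHankel (n : ℕ) (A : Matrix (Fin n) (Fin n) ℝ)
    (b : Fin n → ℝ) : PB n A b = krylovMatrix A b * triangularHankel n (coeffa n A) := by
  ext r c
  change (pk n A (c + 1) *ᵥ b) r =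
    (krylovMatrix A b *ᵥ fun m => triangularHankel n (coeffa n A) m c) r
  refine congrFun ?_ r
  set d := n - (c + 1) with hd
  have hfilter : (range n).filter (fun m => m + c < n) = range (d + 1) := by
    ext m; simp only [mem_filter, mem_range]; omega
  calc pk n A (c + 1) *ᵥ b = ∑ j ∈ range (d + 1), coeffa n A j • (A ^ (d - j) *ᵥ b) := by
        simp only [pk_eq_sum_range, sum_mulVec, smul_mulVec, ← hd]
    _ = ∑ m ∈ range (d + 1), coeffa n A (d - m) • (A ^ m *ᵥ b) := by
        rw [← sum_range_reflect]
        refine sum_congr rfl fun j hj => ?_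
        have : j < d + 1 := mem_range.1 hj
        rw [show d + 1 - 1 - j = d - j by omega, show d - (d - j) = j by omega]
    _ = ∑ m : Fin n, triangularHankel n (coeffa n A) m c • (A ^ (m : ℕ) *ᵥ b) := by
        rw [← hfilter, sum_filter, ← Fin.sum_univ_eq_sum_range
          (fun m => if m + c < n then coeffa n A (d - m) • (A ^ m *ᵥ b) else 0)]
        refine sum_congr rfl fun m _ => ?_
        simp only [triangularHankel, of_apply, ite_smul, zero_smul]
        split_ifs
        · rw [show n - 1 - (m + c) = d - m by omega]
        · rfl
    _ = _ := (krylovMatrix_mulVec A b _).symm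

theorem brunovsky_P_invertible_general (n : ℕ)
    (A : Matrix (Fin n) (Fin n) ℝ) (b : Fin n → ℝ) (hK : Kalman n A b) :
    IsUnit (PB n A b) := by
  rw [PB_eq_krylovMatrix_mul_triangularHankel]
  exact ((isUnit_krylovMatrix_iff A b).2 hK).mul
    (isUnit_triangularHankel (coeffa_zero n A ▸ isUnit_one))

theorem brunovsky_P_invertible (n : ℕ) (hn : 2 ≤ n)
    (A : Matrix (Fin n) (Fin n) ℝ) (b : Fin n → ℝ) (hK : Kalman n A b) :
    IsUnit (PB n A b) :=
  brunovsky_P_invertible_general n A b hK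
end

section
/- Let A be an n×n real matrix (n ≥ 2) and b ∈ ℝⁿ satisfying the Kalman rank condition. Let P be the matrix with columns f_1, ..., f_n where f_n = b and f_k = (A^{n-k} + Σ_{j=1}^{n-k} a_j A^{n-k-j}) b for 1 ≤ k ≤ n-1, with a_j the characteristic polynomial coefficients of A. Then A P = P 𝔄 and P e_n = b, where 𝔄 is the companion matrix of the characteristic polynomial of A (with ones on the superdiagonal and last row (-a_n, ..., -a_1)) and e_n is the last standard basis vector. -/
open Matrix Finset

/-! The polynomials p_k obey the Horner recursion x·p_{k+1} = p_k - a_{n-k}, with p_n = 1 and,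
by Cayley–Hamilton, p_0(A) = 0. Applied to b, the columns f_k = p_k(A) b therefore satisfy
A f_{k+1} = f_k - a_{n-k} f_n with f_0 = 0, which is column k+1 of P 𝔄 read off the shape of 𝔄. -/

section Brunovsky

variable (n : ℕ) (A : Matrix (Fin n) (Fin n) ℝ) (b : Fin n → ℝ)

lemma pk_self : pk n A n = 1 := by
  simp [pk]

lemma pk_zero : pk n A 0 = 0 := by
  have hdeg : A.charpoly.natDegree = n := A.charpoly_natDegree_eq_dim.trans (Fintype.card_fin n)
  have hlead : A.charpoly.coeff n = 1 := by
    simpa only [hdeg] using A.charpoly_monic.coeff_natDegree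
  have hreflect : ∑ j ∈ Icc 1 n, coeffa n A j • A ^ (n - j)
      = ∑ i ∈ range n, A.charpoly.coeff i • A ^ i := by
    rw [← Finset.Ico_add_one_right_eq_Icc, Finset.range_eq_Ico]
    convert Finset.sum_Ico_reflect (fun i => A.charpoly.coeff i • A ^ i) 1 le_rfl using 2 <;>
      simp [coeffa]
  have hCH := A.aeval_self_charpoly
  rw [Polynomial.aeval_eq_sum_range, hdeg, Finset.sum_range_succ, hlead, one_smul] at hCH
  rw [pk, Nat.sub_zero, hreflect, add_comm, hCH]

lemma mul_pk_succ {k : ℕ} (hk : k < n) :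
    A * pk n A (k + 1) = pk n A k - coeffa n A (n - k) • 1 := by
  obtain ⟨m, hm⟩ : ∃ m, n - k = m + 1 := ⟨n - (k + 1), by omega⟩
  have hm' : n - (k + 1) = m := by omega
  have hshift : ∀ j ∈ Icc 1 m,
      A * (coeffa n A j • A ^ (m - j)) = coeffa n A j • A ^ (m + 1 - j) := by
    intro j hj
    rw [mul_smul_comm, ← pow_succ', Nat.sub_add_comm (Finset.mem_Icc.mp hj).2]
  rw [pk, pk, hm, hm', mul_add, Finset.mul_sum, Finset.sum_congr rfl hshift, ← pow_succ',
    Finset.sum_Icc_succ_top (by omega), Nat.sub_self, pow_zero]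
  abel

lemma sum_fin_succ_mul_boole {R : Type*} [NonAssocSemiring R] (g : ℕ → R) (hg : g 0 = 0)
    {c : ℕ} (hc : c ≤ n) : ∑ k : Fin n, g (k + 1) * (if c = k + 1 then 1 else 0) = g c := by
  have hfull : ∑ j ∈ range (n + 1), g j * (if c = j then 1 else 0) = g c := by
    rw [Finset.sum_mul_boole, if_pos (Finset.mem_range.mpr (Nat.lt_succ_of_le hc))]
  rw [Finset.sum_range_succ', hg, zero_mul, add_zero] at hfull
  rw [Fin.sum_univ_eq_sum_range (fun k => g (k + 1) * (if c = k + 1 then 1 else 0)), hfull]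

lemma elast_apply (k : Fin n) : elast n k = if n = k + 1 then 1 else 0 := by
  have := k.isLt
  simp only [elast, show (k : ℕ) = n - 1 ↔ n = k + 1 by omega]

lemma companion_apply (i j : Fin n) :
    companion n A i j
      = (if (j : ℕ) = i + 1 then 1 else 0) - coeffa n A (n - j) * (if n = i + 1 then 1 else 0) := by
  have := i.isLt
  have := j.isLt
  by_cases hi : (i : ℕ) = n - 1
  · simp only [companion, of_apply, if_pos hi, if_pos (show n = i + 1 by omega),
      if_neg (show (j : ℕ) ≠ i + 1 by omega)]
    ring
  · simp only [companion, of_apply, if_neg hi, if_neg (show n ≠ i + 1 by omega), mul_zero,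
      sub_zero]

lemma vecMul_companion (g : ℕ → ℝ) (hg : g 0 = 0) (c : Fin n) :
    ((fun k : Fin n => g (k + 1)) ᵥ* companion n A) c = g c - coeffa n A (n - c) * g n := by
  simp only [vecMul, dotProduct, companion_apply, mul_sub, Finset.sum_sub_distrib,
    mul_left_comm _ (coeffa n A _), ← Finset.mul_sum]
  rw [sum_fin_succ_mul_boole n g hg c.isLt.le, sum_fin_succ_mul_boole n g hg le_rfl]

lemma mul_PB_apply (r c : Fin n) :
    (A * PB n A b) r c = (pk n A c *ᵥ b) r - coeffa n A (n - c) * b r := by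
  have hcol : (A * PB n A b) r c = ((A * pk n A (c + 1)) *ᵥ b) r := by
    rw [← mulVec_mulVec]
    rfl
  rw [hcol, mul_pk_succ n A c.isLt, sub_mulVec, smul_mulVec, one_mulVec]
  rfl

lemma PB_mul_companion_apply (r c : Fin n) :
    (PB n A b * companion n A) r c = (pk n A c *ᵥ b) r - coeffa n A (n - c) * b r := by
  rw [mul_apply_eq_vecMul]
  refine (vecMul_companion n A (fun j => (pk n A j *ᵥ b) r) ?_ c).trans ?_
  · rw [pk_zero, zero_mulVec, Pi.zero_apply]
  · rw [pk_self, one_mulVec]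

lemma PB_mulVec_elast : PB n A b *ᵥ elast n = b := by
  funext r
  simp only [mulVec, dotProduct, elast_apply]
  refine (sum_fin_succ_mul_boole n (fun j => (pk n A j *ᵥ b) r) ?_ le_rfl).trans ?_
  · rw [pk_zero, zero_mulVec, Pi.zero_apply]
  · rw [pk_self, one_mulVec]

end Brunovsky

theorem brunovsky_similarity_general (n : ℕ)
    (A : Matrix (Fin n) (Fin n) ℝ) (b : Fin n → ℝ) :
    A * PB n A b = PB n A b * companion n A ∧ (PB n A b).mulVec (elast n) = b := by
  refine ⟨?_, PB_mulVec_elast n A b⟩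
  ext r c
  rw [mul_PB_apply, PB_mul_companion_apply]

theorem brunovsky_similarity (n : ℕ) (hn : 2 ≤ n)
    (A : Matrix (Fin n) (Fin n) ℝ) (b : Fin n → ℝ) (hK : Kalman n A b) :
    A * PB n A b = PB n A b * companion n A ∧ (PB n A b).mulVec (elast n) = b :=
  brunovsky_similarity_general n A b
end

section
/- Let A ∈ M_{n×n}(ℝ) with polynomials p_k(A) defined from its characteristic coefficients (p_k(A) = A^{n-k} + Σ_{j=1}^{n-k} a_j A^{n-k-j} for k ≤ n-1, p_n(A) = I), and let P(b) be the matrix with columns p_k(A)b. Suppose R ∈ M_{n×n}(ℝ) is orthogonal (R Rᵀ = Rᵀ R = I) and commutes with A (AR = RA). Then for every b ∈ ℝⁿ, the smallest eigenvalue of P(Rb) P(Rb)ᵀ equals the smallest eigenvalue of P(b) P(b)ᵀ. -/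
open Matrix Finset

theorem Matrix.spectrum_mul_mul_transpose_of_mul_transpose_eq_one {ι K : Type*} [Fintype ι]
    [DecidableEq ι] [CommRing K] {R : Matrix ι ι K} (hR : R * Rᵀ = 1) (M : Matrix ι ι K) :
    spectrum K (R * M * Rᵀ) = spectrum K M :=
  spectrum.units_conjugate (u := ⟨R, Rᵀ, hR, mul_eq_one_comm.mp hR⟩)

theorem Matrix.IsHermitian.iInf_eigenvalues_eq_of_spectrum_eq {ι 𝕜 : Type*} [Fintype ι]
    [DecidableEq ι] [RCLike 𝕜] {M N : Matrix ι ι 𝕜} (hM : M.IsHermitian) (hN : N.IsHermitian)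
    (h : spectrum ℝ M = spectrum ℝ N) :
    ⨅ i, hM.eigenvalues i = ⨅ i, hN.eigenvalues i := by
  rw [iInf, iInf, ← hM.spectrum_real_eq_range_eigenvalues, ← hN.spectrum_real_eq_range_eigenvalues,
    h]

theorem Commute.pk_left {n : ℕ} {A R : Matrix (Fin n) (Fin n) ℝ} (h : Commute A R) (k : ℕ) :
    Commute (pk n A k) R :=
  (h.pow_left _).add_left <| Commute.sum_left _ _ _ fun _ _ => (h.pow_left _).smul_left _

theorem PB_mulVec_of_commute {n : ℕ} {A R : Matrix (Fin n) (Fin n) ℝ} (h : Commute A R)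
    (b : Fin n → ℝ) : PB n A (R *ᵥ b) = R * PB n A b := by
  ext r c
  change (pk n A (c + 1) *ᵥ R *ᵥ b) r = ∑ k, R r k * (pk n A (c + 1) *ᵥ b) k
  rw [mulVec_mulVec, (h.pk_left _).eq, ← mulVec_mulVec]
  rfl

theorem lambda_min_invariant_under_commuting_orthogonal_general (n : ℕ)
    (A R : Matrix (Fin n) (Fin n) ℝ) (b : Fin n → ℝ)
    (hR1 : R * Rᵀ = 1) (hcomm : A * R = R * A)
    (h1 : (PB n A (R.mulVec b) * (PB n A (R.mulVec b))ᵀ).IsHermitian)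
    (h2 : (PB n A b * (PB n A b)ᵀ).IsHermitian) :
    (⨅ i, h1.eigenvalues i) = ⨅ i, h2.eigenvalues i := by
  have hconj : PB n A (R *ᵥ b) * (PB n A (R *ᵥ b))ᵀ = R * (PB n A b * (PB n A b)ᵀ) * Rᵀ := by
    rw [PB_mulVec_of_commute hcomm, transpose_mul]
    noncomm_ring
  refine h1.iInf_eigenvalues_eq_of_spectrum_eq h2 ?_
  rw [hconj, spectrum_mul_mul_transpose_of_mul_transpose_eq_one hR1]

theorem lambda_min_invariant_under_commuting_orthogonal (n : ℕ) (hn : 0 < n)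
    (A R : Matrix (Fin n) (Fin n) ℝ) (b : Fin n → ℝ)
    (hR1 : R * Rᵀ = 1) (hR2 : Rᵀ * R = 1) (hcomm : A * R = R * A)
    (h1 : (PB n A (R.mulVec b) * (PB n A (R.mulVec b))ᵀ).IsHermitian)
    (h2 : (PB n A b * (PB n A b)ᵀ).IsHermitian) :
    (⨅ i, h1.eigenvalues i) = ⨅ i, h2.eigenvalues i :=
  lambda_min_invariant_under_commuting_orthogonal_general n A R b hR1 hcomm h1 h2
end

section
/- Let A ∈ M_{n×n}(ℝ) with characteristic polynomial coefficients a_j, and A_□ = [[0, I_n], [A, 0]]. Denote by a_j^□ the characteristic polynomial coefficients of A_□ and define p_k^□(A_□) = A_□^{2n-k} + Σ_{j=1}^{2n-k} a_j^□ A_□^{2n-k-j} for k ≤ 2n-1, p_{2n}^□ = I_{2n}, and similarly p_κ(A) for A. Then for even indices k = 2κ with 1 ≤ κ ≤ n: p_{2κ}^□(A_□) = [[p_κ(A), 0], [0, p_κ(A)]]. -/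
/-!
The characteristic matrix of `A_□` is `[[X, -1], [-A, X]]`; multiplied on the right by the
unimodular `[[1, 0], [X, 1]]` it becomes `J * [[X² - A, X], [0, 1]]` with `J` symplectic, so
`χ_{A_□}(X) = χ_A(X²)`: `a_{2j}^□ = a_j` and the odd coefficients vanish. As `A_□² = diag(A, A)`,
the odd-index terms of `p_{2κ}^□(A_□)` drop out and the even ones are `diag` of those of `p_κ(A)`.
-/

open Matrix Finset

/-- p_k(M) = M^(N-k) + Σ_{j=1}^{N-k} a_j M^(N-k-j), where a_j is the coefficient
of x^(N-j) in the characteristic polynomial of the N×N matrix M (p_N(M) = I). -/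
noncomputable def pkG {m : Type} [Fintype m] [DecidableEq m] (N : ℕ)
    (M : Matrix m m ℝ) (k : ℕ) : Matrix m m ℝ :=
  M ^ (N - k) + ∑ j ∈ Finset.Icc 1 (N - k), M.charpoly.coeff (N - j) • M ^ (N - k - j)

open Polynomial

theorem Finset.sum_Icc_two_mul_eq_sum_even {M : Type*} [AddCommMonoid M] (f : ℕ → M) (k : ℕ)
    (hf : ∀ j ∈ Icc 1 (2 * k), Odd j → f j = 0) :
    ∑ j ∈ Icc 1 (2 * k), f j = ∑ i ∈ Icc 1 k, f (2 * i) := by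
  induction k with
  | zero => simp
  | succ k ih =>
    rw [show 2 * (k + 1) = 2 * k + 1 + 1 by ring, sum_Icc_succ_top (by omega),
      sum_Icc_succ_top (by omega), sum_Icc_succ_top (by omega),
      hf (2 * k + 1) (by simp) (odd_two_mul_add_one k), add_zero,
      ih fun j hj ↦ hf j (Icc_subset_Icc_right (by omega) hj)]
    rfl

namespace Matrix

variable {m R : Type*}

theorem sum_smul_fromBlocks_diag {ι : Type*} [Semiring R] (s : Finset ι) (c : ι → R)
    (M : ι → Matrix m m R) :
    ∑ i ∈ s, c i • fromBlocks (M i) 0 0 (M i)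
      = fromBlocks (∑ i ∈ s, c i • M i) 0 0 (∑ i ∈ s, c i • M i) := by
  ext (i | i) (j | j) <;> simp [Matrix.sum_apply]

variable [Fintype m] [DecidableEq m]

theorem fromBlocks_zero_one_pow_two_mul [Semiring R] (A : Matrix m m R) (k : ℕ) :
    (fromBlocks 0 1 A 0) ^ (2 * k) = fromBlocks (A ^ k) 0 0 (A ^ k) := by
  rw [pow_mul, sq, fromBlocks_multiply]
  simpa using fromBlocks_diagonal_pow A A k

theorem charpoly_fromBlocks_zero_one [CommRing R] (A : Matrix m m R) :
    (fromBlocks 0 1 A 0).charpoly = expand R 2 A.charpoly := by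
  set Q := (expand R 2 : R[X] →+* R[X]).mapMatrix (charmatrix A)
  have hQ : Q = scalar m (X ^ 2 : R[X]) - A.map C := by
    ext i j; by_cases h : i = j <;> simp [Q, h]
  have key : charmatrix (fromBlocks 0 1 A 0) * fromBlocks 1 0 (scalar m X) 1
      = J m R[X] * fromBlocks Q (scalar m X) 0 1 := by
    rw [hQ, charmatrix_fromBlocks]
    simp [J, fromBlocks_multiply, charmatrix_zero, sq, neg_add_eq_sub]
  have hdet := congrArg det key
  rw [det_mul, det_mul, det_fromBlocks_zero₁₂, det_fromBlocks_zero₂₁,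
    SymplecticGroup.det_eq_one (SymplecticGroup.J_mem m R[X])] at hdet
  simp only [det_one, one_mul, mul_one] at hdet
  rw [charpoly, hdet, ← RingHom.map_det, charpoly]
  rfl

end Matrix

theorem pk_block_even_general (n : ℕ) (A : Matrix (Fin n) (Fin n) ℝ)
    (κ : ℕ) :
    pkG (2 * n) (Matrix.fromBlocks 0 1 A 0 : Matrix (Fin n ⊕ Fin n) (Fin n ⊕ Fin n) ℝ) (2 * κ)
      = Matrix.fromBlocks (pkG n A κ) 0 0 (pkG n A κ) := by
  set B : Matrix (Fin n ⊕ Fin n) (Fin n ⊕ Fin n) ℝ := fromBlocks 0 1 A 0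
  have hodd : ∀ j ∈ Icc 1 (2 * (n - κ)), Odd j →
      (expand ℝ 2 A.charpoly).coeff (2 * n - j) • B ^ (2 * (n - κ) - j) = 0 := by
    rintro j hj ⟨i, rfl⟩
    rw [mem_Icc] at hj
    rw [coeff_expand two_pos, if_neg (by omega), zero_smul]
  have heven : ∀ i ∈ Icc 1 (n - κ),
      (expand ℝ 2 A.charpoly).coeff (2 * n - 2 * i) • B ^ (2 * (n - κ) - 2 * i)
        = A.charpoly.coeff (n - i) • fromBlocks (A ^ (n - κ - i)) 0 0 (A ^ (n - κ - i)) := by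
    intro i _
    rw [← Nat.mul_sub, ← Nat.mul_sub, coeff_expand_mul' two_pos, fromBlocks_zero_one_pow_two_mul]
  unfold pkG
  rw [← Nat.mul_sub, charpoly_fromBlocks_zero_one, sum_Icc_two_mul_eq_sum_even _ _ hodd,
    sum_congr rfl heven, fromBlocks_zero_one_pow_two_mul, sum_smul_fromBlocks_diag, fromBlocks_add]
  simp

/-- For even indices k = 2κ, the Brunovsky polynomial of the block matrix
A_□ = [[0, I], [A, 0]] is block diagonal: p_{2κ}^□(A_□) = diag(p_κ(A), p_κ(A)). -/
theorem pk_block_even (n : ℕ) (A : Matrix (Fin n) (Fin n) ℝ)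
    (κ : ℕ) (h1 : 1 ≤ κ) (h2 : κ ≤ n) :
    pkG (2 * n) (Matrix.fromBlocks 0 1 A 0 : Matrix (Fin n ⊕ Fin n) (Fin n ⊕ Fin n) ℝ) (2 * κ)
      = Matrix.fromBlocks (pkG n A κ) 0 0 (pkG n A κ) :=
  pk_block_even_general n A κ
end
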